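/- Let ω ∈ Ω, x ∈ ℝ and k ∈ {1,…,l}. Suppose there exists a solution f^{(k)}(x) of the eigenvalue equation at x with f^{(k)}_0(x) = e_k which is square-summable at +∞ (i.e., f^{(k)}(x) ∈ l²(ℕ; ℂ^l)). Then lim_{y↓0} ( D(ω) Im[M^φ(x+iy, ω)] D(ω) )_{kk} = 0. -/

import Mathlib

/-!
Let `v` be the `k`-th column of the Jost solution at `z = x + iy` and `g` the real part of
`f^{(k)}(x)`: again a square-summable solution, now real, with `g₀ = v₀ = e_k`. Since `D` is
bounded, the Wronskian `Wₙ(u, w) = uₙ·Dₙwₙ₊₁ − uₙ₊₁·Dₙwₙ` of two square-summable solutions tends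
to `0`, so summing Green's identity gives `(z₂ − z₁) ∑_{n≥1} uₙ·wₙ = −W₀(u, w)` for the bilinear
product `·`. For `u = v̄` this says that the `(k,k)` entry equals `y ∑_{n≥1} |vₙ|²`; for `u = g`
it says `Re ∑_{n≥1} gₙ·vₙ = ∑_{n≥1} |vₙ|²`. Hence `∑|vₙ|² ≤ (∑|gₙ|² + ∑|vₙ|²)/2`, so the entry
is at most `y ∑_{n≥1} |gₙ|²`, which tends to `0`.
-/

open MeasureTheory Matrix Filter Topology Finset

noncomputable section

/-- Complexification of a real matrix. -/
def cx {l : ℕ} (A : Matrix (Fin l) (Fin l) ℝ) : Matrix (Fin l) (Fin l) ℂ :=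
  A.map (fun a => (a : ℂ))

/-- The imaginary part of a complex square matrix: `Im[A] = (A − Aᴴ)/(2i)`. -/
def matIm {m : Type*} (A : Matrix m m ℂ) : Matrix m m ℂ :=
  (2 * Complex.I)⁻¹ • (A - Aᴴ)

/-- `F` is a matrix solution of the eigenvalue equation
`D_{n-1} F_{n-1} + D_n F_{n+1} + V_n F_n = z F_n` (on `ℤ_+`, for `n ≥ 1`). -/
def IsMatSol {l : ℕ} (Ds Vs : ℕ → Matrix (Fin l) (Fin l) ℂ) (z : ℂ)
    (F : ℕ → Matrix (Fin l) (Fin l) ℂ) : Prop :=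
  ∀ n : ℕ, 1 ≤ n → Ds (n - 1) * F (n - 1) + Ds n * F (n + 1) + Vs n * F n = z • F n

/-- `F` is the Jost solution at `+∞`: a matrix solution with `F 0 = I`,
square-summable on `ℤ_+`. -/
def IsJost {l : ℕ} (Ds Vs : ℕ → Matrix (Fin l) (Fin l) ℂ) (z : ℂ)
    (F : ℕ → Matrix (Fin l) (Fin l) ℂ) : Prop :=
  IsMatSol Ds Vs z F ∧ F 0 = 1 ∧
    Summable (fun n : ℕ => ∑ i, ∑ j, ‖F n i j‖ ^ 2)

/-- `u` is a (vector) solution of the eigenvalue equation on `ℤ_+`. -/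
def IsVecSol {l : ℕ} (Ds Vs : ℕ → Matrix (Fin l) (Fin l) ℂ) (z : ℂ)
    (u : ℕ → Fin l → ℂ) : Prop :=
  ∀ n : ℕ, 1 ≤ n → Ds (n - 1) *ᵥ u (n - 1) + Ds n *ᵥ u (n + 1) + Vs n *ᵥ u n = z • u n

section SquareSummable

variable {ι : Type*} [Fintype ι]

lemma norm_dotProduct_le_half_add (u v : ι → ℂ) :
    ‖u ⬝ᵥ v‖ ≤ (∑ i, ‖u i‖ ^ 2 + ∑ i, ‖v i‖ ^ 2) / 2 :=
  calc ‖u ⬝ᵥ v‖ ≤ ∑ i, ‖u i‖ * ‖v i‖ := by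
        simpa only [dotProduct, norm_mul] using norm_sum_le Finset.univ fun i => u i * v i
    _ ≤ ∑ i, (‖u i‖ ^ 2 + ‖v i‖ ^ 2) / 2 :=
        Finset.sum_le_sum fun i _ => by nlinarith [sq_nonneg (‖u i‖ - ‖v i‖)]
    _ = (∑ i, ‖u i‖ ^ 2 + ∑ i, ‖v i‖ ^ 2) / 2 := by
        rw [← Finset.sum_div, Finset.sum_add_distrib]

lemma star_dotProduct_self_eq (v : ι → ℂ) : star v ⬝ᵥ v = ((∑ i, ‖v i‖ ^ 2 : ℝ) : ℂ) := by
  simp [dotProduct, Complex.conj_mul']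

lemma mulVec_dotProduct_of_isSymm {R : Type*} [CommSemiring R] {A : Matrix ι ι R}
    (hA : A.IsSymm) (u w : ι → R) : (A *ᵥ u) ⬝ᵥ w = u ⬝ᵥ (A *ᵥ w) := by
  rw [dotProduct_mulVec, ← mulVec_transpose, hA]

variable {u v : ℕ → ι → ℂ}

lemma summable_sq_re_of_summable_sq (hu : Summable fun n => ∑ i, ‖u n i‖ ^ 2) :
    Summable fun n => ∑ i, ‖((u n i).re : ℂ)‖ ^ 2 :=
  .of_nonneg_of_le (fun n => by positivity) (fun n => Finset.sum_le_sum fun i _ =>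
    pow_le_pow_left₀ (norm_nonneg _) (by simpa using Complex.abs_re_le_norm (u n i)) 2) hu

lemma summable_dotProduct_of_summable_sq (hu : Summable fun n => ∑ i, ‖u n i‖ ^ 2)
    (hv : Summable fun n => ∑ i, ‖v n i‖ ^ 2) : Summable fun n => u n ⬝ᵥ v n :=
  .of_norm_bounded ((hu.add hv).div_const 2) fun _ => norm_dotProduct_le_half_add _ _

lemma norm_tsum_dotProduct_le (hu : Summable fun n => ∑ i, ‖u n i‖ ^ 2)
    (hv : Summable fun n => ∑ i, ‖v n i‖ ^ 2) :
    ‖∑' n, u n ⬝ᵥ v n‖ ≤ (∑' n, ∑ i, ‖u n i‖ ^ 2 + ∑' n, ∑ i, ‖v n i‖ ^ 2) / 2 :=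
  tsum_of_norm_bounded ((hu.hasSum.add hv.hasSum).div_const 2) fun _ =>
    norm_dotProduct_le_half_add _ _

lemma tendsto_zero_of_summable_sq (hu : Summable fun n => ∑ i, ‖u n i‖ ^ 2) :
    Tendsto u atTop (𝓝 0) := by
  refine tendsto_pi_nhds.2 fun i => tendsto_zero_iff_norm_tendsto_zero.2 ?_
  have hsq : Tendsto (fun n => ‖u n i‖ ^ 2) atTop (𝓝 0) :=
    squeeze_zero (fun n => by positivity)
      (fun n => Finset.single_le_sum (f := fun j => ‖u n j‖ ^ 2) (fun j _ => by positivity)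
        (Finset.mem_univ i)) hu.tendsto_atTop_zero
  simpa using hsq.sqrt

lemma tendsto_dotProduct_mulVec_zero {α : Type*} {l : Filter α} {p q : α → ι → ℂ}
    {A : α → Matrix ι ι ℂ} (hp : Tendsto p l (𝓝 0)) (hq : Tendsto q l (𝓝 0))
    (hA : ∃ C, ∀ a i j, ‖A a i j‖ ≤ C) :
    Tendsto (fun a => p a ⬝ᵥ (A a *ᵥ q a)) l (𝓝 0) := by
  obtain ⟨C, hC⟩ := hA
  have hterm : ∀ i j, Tendsto (fun a => p a i * q a j * A a i j) l (𝓝 0) := fun i j => by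
    refine Tendsto.zero_mul_isBoundedUnder_le ?_ (isBoundedUnder_of ⟨C, fun a => hC a i j⟩)
    simpa using (tendsto_pi_nhds.1 hp i).mul (tendsto_pi_nhds.1 hq j)
  have hsum := tendsto_finsetSum Finset.univ fun i _ =>
    tendsto_finsetSum Finset.univ fun j _ => hterm i j
  simp only [Finset.sum_const_zero] at hsum
  refine hsum.congr fun a => ?_
  simp only [dotProduct, mulVec, Finset.mul_sum]
  exact Finset.sum_congr rfl fun i _ => Finset.sum_congr rfl fun j _ => by ring

end SquareSummable

section Jacobi

variable {l : ℕ}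

lemma cx_conjTranspose (A : Matrix (Fin l) (Fin l) ℝ) : (cx A)ᴴ = (cx A)ᵀ := by
  ext i j
  simp [cx]

lemma star_cx_mulVec (A : Matrix (Fin l) (Fin l) ℝ) (u : Fin l → ℂ) :
    star (cx A *ᵥ u) = cx A *ᵥ star u := by
  rw [star_mulVec, cx_conjTranspose, vecMul_transpose]

def wronskian (Ds : ℕ → Matrix (Fin l) (Fin l) ℂ) (u v : ℕ → Fin l → ℂ) (n : ℕ) : ℂ :=
  u n ⬝ᵥ (Ds n *ᵥ v (n + 1)) - u (n + 1) ⬝ᵥ (Ds n *ᵥ v n)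

variable {Ds Vs : ℕ → Matrix (Fin l) (Fin l) ℂ} {z z₁ z₂ : ℂ} {u v : ℕ → Fin l → ℂ}

lemma IsMatSol.mulVec {F : ℕ → Matrix (Fin l) (Fin l) ℂ} (hF : IsMatSol Ds Vs z F)
    (c : Fin l → ℂ) : IsVecSol Ds Vs z fun n => F n *ᵥ c := fun n hn => by
  simpa [add_mulVec, mulVec_mulVec, smul_mulVec] using congrArg (· *ᵥ c) (hF n hn)

lemma IsVecSol.add (hu : IsVecSol Ds Vs z u) (hv : IsVecSol Ds Vs z v) :
    IsVecSol Ds Vs z fun n => u n + v n := fun n hn => by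
  simp only [mulVec_add, smul_add, ← hu n hn, ← hv n hn]
  abel

lemma IsVecSol.const_smul (hu : IsVecSol Ds Vs z u) (c : ℂ) :
    IsVecSol Ds Vs z fun n => c • u n := fun n hn => by
  simp only [mulVec_smul, smul_comm z c, ← hu n hn, smul_add]

lemma wronskian_succ_sub (hDs : ∀ n, (Ds n).IsSymm) (hVs : ∀ n, (Vs n).IsSymm)
    (hu : IsVecSol Ds Vs z₁ u) (hv : IsVecSol Ds Vs z₂ v) (n : ℕ) :
    wronskian Ds u v (n + 1) - wronskian Ds u v n = (z₂ - z₁) * (u (n + 1) ⬝ᵥ v (n + 1)) := by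
  have hu' := congrArg (· ⬝ᵥ v (n + 1)) (hu (n + 1) (by omega))
  have hv' := congrArg (u (n + 1) ⬝ᵥ ·) (hv (n + 1) (by omega))
  simp only [Nat.add_sub_cancel, add_dotProduct, dotProduct_add, smul_dotProduct,
    dotProduct_smul, smul_eq_mul] at hu' hv'
  rw [mulVec_dotProduct_of_isSymm (hDs n), mulVec_dotProduct_of_isSymm (hDs (n + 1)),
    mulVec_dotProduct_of_isSymm (hVs (n + 1))] at hu'
  unfold wronskian
  linear_combination hv' - hu'

lemma sub_mul_tsum_dotProduct_eq_neg_wronskian (hDs : ∀ n, (Ds n).IsSymm)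
    (hVs : ∀ n, (Vs n).IsSymm) (hbdd : ∃ C, ∀ n i j, ‖Ds n i j‖ ≤ C)
    (hu : IsVecSol Ds Vs z₁ u) (hv : IsVecSol Ds Vs z₂ v)
    (hus : Summable fun n => ∑ i, ‖u n i‖ ^ 2) (hvs : Summable fun n => ∑ i, ‖v n i‖ ^ 2) :
    (z₂ - z₁) * ∑' n, u (n + 1) ⬝ᵥ v (n + 1) = -wronskian Ds u v 0 := by
  have hsum : Summable fun n => u (n + 1) ⬝ᵥ v (n + 1) :=
    summable_dotProduct_of_summable_sq
      ((summable_nat_add_iff (f := fun n => ∑ i, ‖u n i‖ ^ 2) 1).2 hus)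
      ((summable_nat_add_iff (f := fun n => ∑ i, ‖v n i‖ ^ 2) 1).2 hvs)
  have hu0 := tendsto_zero_of_summable_sq hus
  have hv0 := tendsto_zero_of_summable_sq hvs
  have hW : Tendsto (wronskian Ds u v) atTop (𝓝 0) := by
    have h := (tendsto_dotProduct_mulVec_zero hu0 (hv0.comp (tendsto_add_atTop_nat 1)) hbdd).sub
      (tendsto_dotProduct_mulVec_zero (hu0.comp (tendsto_add_atTop_nat 1)) hv0 hbdd)
    rwa [sub_zero] at h
  have hpartial : (fun N => ∑ n ∈ Finset.range N, (z₂ - z₁) * (u (n + 1) ⬝ᵥ v (n + 1))) =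
      fun N => wronskian Ds u v N - wronskian Ds u v 0 := by
    funext N
    rw [← Finset.sum_range_sub]
    exact Finset.sum_congr rfl fun n _ => (wronskian_succ_sub hDs hVs hu hv n).symm
  have hlim := (hsum.hasSum.mul_left (z₂ - z₁)).tendsto_sum_nat
  rw [hpartial] at hlim
  rw [← zero_sub]
  exact tendsto_nhds_unique hlim (hW.sub_const _)

end Jacobi

section RealCoefficients

variable {l : ℕ} {Dr Vr : ℕ → Matrix (Fin l) (Fin l) ℝ} {z : ℂ} {g v : ℕ → Fin l → ℂ}

lemma star_dotProduct_cx_mulVec (A : Matrix (Fin l) (Fin l) ℝ) (p q : Fin l → ℂ) :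
    star (p ⬝ᵥ (cx A *ᵥ q)) = star p ⬝ᵥ (cx A *ᵥ star q) := by
  rw [← star_dotProduct_star, dotProduct_comm, star_cx_mulVec]

lemma isSymm_cx {A : Matrix (Fin l) (Fin l) ℝ} (hA : A.IsSymm) : (cx A).IsSymm :=
  hA.map _

lemma norm_cx_apply_le {C : ℝ} (hbdd : ∀ n i j, |Dr n i j| ≤ C) (n : ℕ) (i j : Fin l) :
    ‖cx (Dr n) i j‖ ≤ C := by
  simpa [cx] using hbdd n i j

lemma IsVecSol.conj (hv : IsVecSol (fun n => cx (Dr n)) (fun n => cx (Vr n)) z v) :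
    IsVecSol (fun n => cx (Dr n)) (fun n => cx (Vr n)) (starRingEnd ℂ z)
      fun n => star (v n) := fun n hn => by
  simpa [star_cx_mulVec, Complex.star_def] using congrArg star (hv n hn)

lemma IsVecSol.re {x : ℝ} (hg : IsVecSol (fun n => cx (Dr n)) (fun n => cx (Vr n)) x g) :
    IsVecSol (fun n => cx (Dr n)) (fun n => cx (Vr n)) x fun n i => ((g n i).re : ℂ) := by
  have h : (fun n i => ((g n i).re : ℂ)) = fun n => (2⁻¹ : ℂ) • (g n + star (g n)) := by
    funext n i
    simp only [Complex.re_eq_add_conj, Pi.smul_apply, Pi.add_apply, Pi.star_apply,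
      Complex.star_def, smul_eq_mul]
    ring
  rw [h]
  exact (hg.add (by simpa using hg.conj)).const_smul _

lemma im_star_dotProduct_mulVec_eq (hD : ∀ n, (Dr n).IsSymm) (hV : ∀ n, (Vr n).IsSymm)
    (hbdd : ∃ C, ∀ n i j, |Dr n i j| ≤ C)
    (hv : IsVecSol (fun n => cx (Dr n)) (fun n => cx (Vr n)) z v)
    (hvs : Summable fun n => ∑ i, ‖v n i‖ ^ 2) :
    (star (v 0) ⬝ᵥ (cx (Dr 0) *ᵥ v 1)).im = -(z.im * ∑' n, ∑ i, ‖v (n + 1) i‖ ^ 2) := by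
  have h := sub_mul_tsum_dotProduct_eq_neg_wronskian (fun n => isSymm_cx (hD n))
    (fun n => isSymm_cx (hV n)) (hbdd.imp fun _ => norm_cx_apply_le) hv.conj hv
    (by simpa using hvs) hvs
  have hW : wronskian (fun n => cx (Dr n)) (fun n => star (v n)) v 0 =
      star (v 0) ⬝ᵥ (cx (Dr 0) *ᵥ v 1) - starRingEnd ℂ (star (v 0) ⬝ᵥ (cx (Dr 0) *ᵥ v 1)) := by
    rw [wronskian, ← Complex.star_def, star_dotProduct_cx_mulVec, star_star,
      ← mulVec_dotProduct_of_isSymm (isSymm_cx (hD 0)) (v 0), dotProduct_comm (cx (Dr 0) *ᵥ v 0)]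
  simp only [star_dotProduct_self_eq, ← Complex.ofReal_tsum, hW, Complex.sub_conj] at h
  have him : 2 * z.im * ∑' n, ∑ i, ‖v (n + 1) i‖ ^ 2 =
      -(2 * (star (v 0) ⬝ᵥ (cx (Dr 0) *ᵥ v 1)).im) := by
    simpa using congrArg Complex.im h
  linarith

lemma im_mul_re_tsum_dotProduct_eq (hD : ∀ n, (Dr n).IsSymm) (hV : ∀ n, (Vr n).IsSymm)
    (hbdd : ∃ C, ∀ n i j, |Dr n i j| ≤ C)
    (hg : IsVecSol (fun n => cx (Dr n)) (fun n => cx (Vr n)) z.re g)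
    (hv : IsVecSol (fun n => cx (Dr n)) (fun n => cx (Vr n)) z v)
    (hgs : Summable fun n => ∑ i, ‖g n i‖ ^ 2) (hvs : Summable fun n => ∑ i, ‖v n i‖ ^ 2)
    (hg_real : ∀ n, star (g n) = g n) (hv0 : star (v 0) = v 0) :
    z.im * (∑' n, g (n + 1) ⬝ᵥ v (n + 1)).re = -(g 0 ⬝ᵥ (cx (Dr 0) *ᵥ v 1)).im := by
  have h := sub_mul_tsum_dotProduct_eq_neg_wronskian (fun n => isSymm_cx (hD n))
    (fun n => isSymm_cx (hV n)) (hbdd.imp fun _ => norm_cx_apply_le) hg hv hgs hvs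
  have hreal : (g 1 ⬝ᵥ (cx (Dr 0) *ᵥ v 0)).im = 0 := by
    rw [← Complex.conj_eq_iff_im, ← Complex.star_def, star_dotProduct_cx_mulVec, hg_real, hv0]
  have hz : z - z.re = z.im * Complex.I := by
    apply Complex.ext <;> simp
  rw [hz, wronskian] at h
  have him : z.im * (∑' n, g (n + 1) ⬝ᵥ v (n + 1)).re =
      -((g 0 ⬝ᵥ (cx (Dr 0) *ᵥ v 1)).im - (g 1 ⬝ᵥ (cx (Dr 0) *ᵥ v 0)).im) := by
    simpa using congrArg Complex.im h
  rwa [hreal, sub_zero] at him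

lemma tsum_sq_le_of_real_solution (hD : ∀ n, (Dr n).IsSymm) (hV : ∀ n, (Vr n).IsSymm)
    (hbdd : ∃ C, ∀ n i j, |Dr n i j| ≤ C) (hz : z.im ≠ 0)
    (hg : IsVecSol (fun n => cx (Dr n)) (fun n => cx (Vr n)) z.re g)
    (hv : IsVecSol (fun n => cx (Dr n)) (fun n => cx (Vr n)) z v)
    (hgs : Summable fun n => ∑ i, ‖g n i‖ ^ 2) (hvs : Summable fun n => ∑ i, ‖v n i‖ ^ 2)
    (hg_real : ∀ n, star (g n) = g n) (hv0 : v 0 = g 0) :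
    ∑' n, ∑ i, ‖v (n + 1) i‖ ^ 2 ≤ ∑' n, ∑ i, ‖g (n + 1) i‖ ^ 2 := by
  have hv0_real : star (v 0) = v 0 := hv0 ▸ hg_real 0
  have him := im_star_dotProduct_mulVec_eq hD hV hbdd hv hvs
  have hre := im_mul_re_tsum_dotProduct_eq hD hV hbdd hg hv hgs hvs hg_real hv0_real
  rw [hv0_real, hv0] at him
  have hre_eq : (∑' n, g (n + 1) ⬝ᵥ v (n + 1)).re = ∑' n, ∑ i, ‖v (n + 1) i‖ ^ 2 :=
    mul_left_cancel₀ hz (by linarith)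
  have hnorm := norm_tsum_dotProduct_le
    ((summable_nat_add_iff (f := fun n => ∑ i, ‖g n i‖ ^ 2) 1).2 hgs)
    ((summable_nat_add_iff (f := fun n => ∑ i, ‖v n i‖ ^ 2) 1).2 hvs)
  linarith [Complex.re_le_norm (∑' n, g (n + 1) ⬝ᵥ v (n + 1))]

end RealCoefficients

section WeylTitchmarsh

lemma mul_matIm_mul_conjTranspose {m : Type*} [Fintype m] (E A : Matrix m m ℂ) :
    E * matIm A * Eᴴ = matIm (E * A * Eᴴ) := by
  simp only [matIm, Matrix.mul_smul, Matrix.smul_mul, Matrix.mul_sub, Matrix.sub_mul,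
    conjTranspose_mul, conjTranspose_conjTranspose, Matrix.mul_assoc]

lemma matIm_apply_self {m : Type*} (A : Matrix m m ℂ) (k : m) :
    matIm A k k = ((A k k).im : ℂ) := by
  rw [matIm, Matrix.smul_apply, Matrix.sub_apply, conjTranspose_apply, Complex.star_def,
    Complex.sub_conj, smul_eq_mul]
  field_simp
  push_cast
  ring

variable {l : ℕ}

lemma cx_mul_matIm_neg_mul_inv_mul_apply_self {D₀ : Matrix (Fin l) (Fin l) ℝ}
    (hsym : D₀.IsSymm) (hunit : IsUnit D₀) (F₁ : Matrix (Fin l) (Fin l) ℂ) (k : Fin l) :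
    (cx D₀ * matIm (-(F₁ * (cx D₀)⁻¹)) * cx D₀) k k = ((-((cx D₀ * F₁) k k).im : ℝ) : ℂ) := by
  have hdet : IsUnit (cx D₀).det :=
    (isUnit_iff_isUnit_det _).1 (hunit.map Complex.ofRealHom.mapMatrix)
  have hH : (cx D₀)ᴴ = cx D₀ := (cx_conjTranspose D₀).trans (isSymm_cx hsym)
  calc (cx D₀ * matIm (-(F₁ * (cx D₀)⁻¹)) * cx D₀) k k
      = (cx D₀ * matIm (-(F₁ * (cx D₀)⁻¹)) * (cx D₀)ᴴ) k k := by rw [hH]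
    _ = matIm (-(cx D₀ * F₁)) k k := by
      rw [mul_matIm_mul_conjTranspose, hH, Matrix.mul_neg, Matrix.neg_mul, ← Matrix.mul_assoc,
        nonsing_inv_mul_cancel_right _ _ hdet]
    _ = ((-((cx D₀ * F₁) k k).im : ℝ) : ℂ) := by
      rw [matIm_apply_self, neg_apply, Complex.neg_im]

lemma IsJost.summable_sq_mulVec_single {Ds Vs : ℕ → Matrix (Fin l) (Fin l) ℂ} {z : ℂ}
    {F : ℕ → Matrix (Fin l) (Fin l) ℂ} (hF : IsJost Ds Vs z F) (k : Fin l) :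
    Summable fun n => ∑ i, ‖(F n *ᵥ Pi.single k 1) i‖ ^ 2 := by
  refine .of_nonneg_of_le (fun n => by positivity) (fun n => Finset.sum_le_sum fun i _ => ?_)
    hF.2.2
  simpa [mulVec_single_one] using Finset.single_le_sum (f := fun j => ‖F n i j‖ ^ 2)
    (fun j _ => by positivity) (Finset.mem_univ k)

lemma weyl_diag_entry_eq_im_mul_tsum {Dr Vr : ℕ → Matrix (Fin l) (Fin l) ℝ}
    (hD : ∀ n, (Dr n).IsSymm) (hV : ∀ n, (Vr n).IsSymm) (hbdd : ∃ C, ∀ n i j, |Dr n i j| ≤ C)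
    (hunit : IsUnit (Dr 0)) {z : ℂ} {F : ℕ → Matrix (Fin l) (Fin l) ℂ}
    (hF : IsJost (fun n => cx (Dr n)) (fun n => cx (Vr n)) z F) (k : Fin l) :
    (cx (Dr 0) * matIm (-(F 1 * (cx (Dr 0))⁻¹)) * cx (Dr 0)) k k =
      ((z.im * ∑' n, ∑ i, ‖(F (n + 1) *ᵥ Pi.single k 1) i‖ ^ 2 : ℝ) : ℂ) := by
  have him := im_star_dotProduct_mulVec_eq hD hV hbdd (hF.1.mulVec (Pi.single k 1))
    (hF.summable_sq_mulVec_single k)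
  have hη : star (F 0 *ᵥ Pi.single k 1) ⬝ᵥ (cx (Dr 0) *ᵥ (F 1 *ᵥ Pi.single k 1)) =
      (cx (Dr 0) * F 1) k k := by
    rw [hF.2.1, one_mulVec, Pi.star_single, star_one, single_dotProduct, one_mul, mulVec_mulVec,
      mulVec_single_one, col_apply]
  rw [hη] at him
  rw [cx_mul_matIm_neg_mul_inv_mul_apply_self (hD 0) hunit, him, neg_neg]

lemma norm_weyl_diag_entry_le {Dr Vr : ℕ → Matrix (Fin l) (Fin l) ℝ}
    (hD : ∀ n, (Dr n).IsSymm) (hV : ∀ n, (Vr n).IsSymm) (hbdd : ∃ C, ∀ n i j, |Dr n i j| ≤ C)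
    (hunit : IsUnit (Dr 0)) {z : ℂ} (hz : 0 < z.im) {F : ℕ → Matrix (Fin l) (Fin l) ℂ}
    (hF : IsJost (fun n => cx (Dr n)) (fun n => cx (Vr n)) z F) {g : ℕ → Fin l → ℂ}
    (hg : IsVecSol (fun n => cx (Dr n)) (fun n => cx (Vr n)) z.re g)
    (hgs : Summable fun n => ∑ i, ‖g n i‖ ^ 2) (hg_real : ∀ n, star (g n) = g n) {k : Fin l}
    (hg0 : g 0 = Pi.single k 1) :
    ‖(cx (Dr 0) * matIm (-(F 1 * (cx (Dr 0))⁻¹)) * cx (Dr 0)) k k‖ ≤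
      z.im * ∑' n, ∑ i, ‖g (n + 1) i‖ ^ 2 := by
  have hle := tsum_sq_le_of_real_solution hD hV hbdd hz.ne' hg (hF.1.mulVec (Pi.single k 1)) hgs
    (hF.summable_sq_mulVec_single k) hg_real (by rw [hF.2.1, one_mulVec, hg0])
  rw [weyl_diag_entry_eq_im_mul_tsum hD hV hbdd hunit hF k, Complex.norm_real, Real.norm_eq_abs,
    abs_of_nonneg (by positivity)]
  exact mul_le_mul_of_nonneg_left hle hz.le

end WeylTitchmarsh

theorem weyl_titchmarsh_diag_entry_tendsto_zero_general
    {Ω : Type*}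
    (T : Equiv.Perm Ω)
    {l : ℕ} (D V : Ω → Matrix (Fin l) (Fin l) ℝ)
    (hDsymm : ∀ ω, (D ω).IsSymm) (hDinv : ∀ ω, IsUnit (D ω))
    (hDbdd : ∃ C : ℝ, ∀ ω i j, |D ω i j| ≤ C)
    (hVsymm : ∀ ω, (V ω).IsSymm)
    (ω : Ω) (x : ℝ) (k : Fin l)
    (F : ℂ → ℕ → Matrix (Fin l) (Fin l) ℂ)
    (hF : ∀ z : ℂ, z.im ≠ 0 →
      IsJost (fun n => cx (D ((T ^ n) ω))) (fun n => cx (V ((T ^ n) ω))) z (F z))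
    (g : ℕ → Fin l → ℂ)
    (hg : IsVecSol (fun n => cx (D ((T ^ n) ω))) (fun n => cx (V ((T ^ n) ω)))
      ((x : ℂ)) g)
    (hg0 : g 0 = fun i => if i = k then 1 else 0)
    (hgsum : Summable (fun n : ℕ => ∑ i, ‖g n i‖ ^ 2)) :
    Tendsto
      (fun y : ℝ =>
        (cx (D ω) * matIm (-(F ((x : ℂ) + (y : ℂ) * Complex.I) 1 * (cx (D ω))⁻¹))
          * cx (D ω)) k k)
      (𝓝[>] 0) (𝓝 0) := by
  have hD : ∀ n : ℕ, (D ((T ^ n) ω)).IsSymm := fun n => hDsymm _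
  have hV : ∀ n : ℕ, (V ((T ^ n) ω)).IsSymm := fun n => hVsymm _
  have hbdd : ∃ C, ∀ (n : ℕ) i j, |D ((T ^ n) ω) i j| ≤ C :=
    hDbdd.imp fun _ hC n => hC _
  set u : ℕ → Fin l → ℂ := fun n i => ((g n i).re : ℂ)
  have hu0 : u 0 = Pi.single k 1 := by
    funext i
    by_cases hi : i = k <;> simp [u, hg0, hi]
  have hu_real : ∀ n, star (u n) = u n := fun n => funext fun i => Complex.conj_ofReal _
  have hbound : ∀ y : ℝ, 0 < y →
      ‖(cx (D ω) * matIm (-(F ((x : ℂ) + (y : ℂ) * Complex.I) 1 * (cx (D ω))⁻¹))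
        * cx (D ω)) k k‖ ≤ y * ∑' n, ∑ i, ‖u (n + 1) i‖ ^ 2 := by
    intro y hy
    set z : ℂ := (x : ℂ) + (y : ℂ) * Complex.I
    have hzre : z.re = x := by simp [z]
    have hzim : z.im = y := by simp [z]
    have h := norm_weyl_diag_entry_le hD hV hbdd (hDinv ω) (hzim ▸ hy) (hF z (hzim ▸ hy.ne'))
      (hzre ▸ hg.re) (summable_sq_re_of_summable_sq hgsum) hu_real hu0
    rwa [hzim] at h
  refine squeeze_zero_norm' (eventually_nhdsWithin_of_forall hbound) ?_
  exact tendsto_nhdsWithin_of_tendsto_nhds ((continuous_mul_const _).tendsto' 0 0 (zero_mul _))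

/-- If there is a square-summable solution of the eigenvalue equation at the
real energy `x` with initial value `e_k`, then the `(k,k)` entry of
`D(ω) Im[M^φ(x+iy, ω)] D(ω)` tends to `0` as `y ↓ 0`, where
`M^φ(z,ω) = −F_1(z,ω) D(ω)⁻¹` is the Weyl–Titchmarsh function. -/
theorem weyl_titchmarsh_diag_entry_tendsto_zero
    {Ω : Type*} [MeasurableSpace Ω] (ν : Measure Ω) [IsProbabilityMeasure ν]
    (T : Equiv.Perm Ω) (hT : Ergodic (⇑T) ν)
    {l : ℕ} (D V : Ω → Matrix (Fin l) (Fin l) ℝ)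
    (hDsymm : ∀ ω, (D ω).IsSymm) (hDinv : ∀ ω, IsUnit (D ω))
    (hDbdd : ∃ C : ℝ, ∀ ω i j, |D ω i j| ≤ C)
    (hVsymm : ∀ ω, (V ω).IsSymm)
    (ω : Ω) (x : ℝ) (k : Fin l)
    (F : ℂ → ℕ → Matrix (Fin l) (Fin l) ℂ)
    (hF : ∀ z : ℂ, z.im ≠ 0 →
      IsJost (fun n => cx (D ((T ^ n) ω))) (fun n => cx (V ((T ^ n) ω))) z (F z))
    (g : ℕ → Fin l → ℂ)
    (hg : IsVecSol (fun n => cx (D ((T ^ n) ω))) (fun n => cx (V ((T ^ n) ω)))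
      ((x : ℂ)) g)
    (hg0 : g 0 = fun i => if i = k then 1 else 0)
    (hgsum : Summable (fun n : ℕ => ∑ i, ‖g n i‖ ^ 2)) :
    Tendsto
      (fun y : ℝ =>
        (cx (D ω) * matIm (-(F ((x : ℂ) + (y : ℂ) * Complex.I) 1 * (cx (D ω))⁻¹))
          * cx (D ω)) k k)
      (𝓝[>] 0) (𝓝 0) :=
  weyl_titchmarsh_diag_entry_tendsto_zero_general T D V hDsymm hDinv hDbdd hVsymm ω x k F hF g hg
    hg0 hgsum
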